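/- Let M = K(a,b,c,d) be a 4×4 K3 Markov matrix whose eigenvalues 1, x = a+b−c−d, y = a−b+c−d, z = a−b−c+d are pairwise distinct. Then the following are equivalent: (i) M is embeddable, i.e. there exists a rate matrix Q with exp(Q) = M; (ii) M is K3-embeddable, i.e. there exists a rate matrix Q with K3 form and exp(Q) = M; (iii) x > 0, y > 0, z > 0, and x ≥ y·z, y ≥ x·z, z ≥ x·y. -/

import Mathlib

def K {α : Type*} (a b c d : α) : Matrix (Fin 4) (Fin 4) α :=
  !![a, b, c, d;
     b, a, d, c;
     c, d, a, b;
     d, c, b, a]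

def IsMarkov {k : ℕ} (M : Matrix (Fin k) (Fin k) ℝ) : Prop :=
  (∀ i j, 0 ≤ M i j) ∧ ∀ i, ∑ j, M i j = 1

def IsRate {k : ℕ} (Q : Matrix (Fin k) (Fin k) ℝ) : Prop :=
  (∀ i j, i ≠ j → 0 ≤ Q i j) ∧ ∀ i, ∑ j, Q i j = 0

/-!
The Hadamard matrix `H` diagonalises every K3 matrix at once:
`K(a,b,c,d) = H · diag(a+b+c+d, x, y, z) · H⁻¹`. A logarithm `Q` of `M` commutes with `M`, so
`H⁻¹ Q H` commutes with `diag(1, x, y, z)`; as these eigenvalues are distinct, `H⁻¹ Q H` is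
diagonal, with entries `0, p, q, r` whose exponentials are `1, x, y, z`. Hence `Q` is itself K3
and `x, y, z > 0`. The off-diagonal entries of `H · diag(0, p, q, r) · H⁻¹` are
`(p - q - r)/4`, `(q - p - r)/4`, `(r - p - q)/4`, so `Q` is a rate matrix iff `q + r ≤ p`,
`p + r ≤ q`, `p + q ≤ r`, i.e. `yz ≤ x`, `xz ≤ y`, `xy ≤ z`. Conversely `p = log x`,
`q = log y`, `r = log z` give a K3 rate logarithm.
-/

open Matrix NormedSpace

theorem Matrix.eq_diagonal_diag_of_commute_diagonal {n R : Type*} [Fintype n] [DecidableEq n]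
    [CommRing R] [NoZeroDivisors R] {v : n → R} (hv : Function.Injective v)
    {A : Matrix n n R} (h : Commute A (diagonal v)) : A = diagonal A.diag := by
  ext i j
  obtain rfl | hij := eq_or_ne i j
  · simp
  have hij' := congr_fun₂ h.eq i j
  rw [mul_diagonal, diagonal_mul] at hij'
  have : (v j - v i) * A i j = 0 := by linear_combination hij'
  simpa [diagonal_apply_ne _ hij, sub_eq_zero, hv.ne hij.symm] using this

section Conj

variable {n : Type*} [Fintype n] [DecidableEq n] {U : Matrix n n ℝ}

theorem Matrix.exp_conj_diagonal (hU : IsUnit U) (w : n → ℝ) :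
    exp (U * diagonal w * U⁻¹) = U * diagonal (Real.exp ∘ w) * U⁻¹ := by
  rw [exp_conj _ _ hU, exp_diagonal, Pi.exp_def, Real.exp_eq_exp_ℝ]
  rfl

theorem Matrix.exists_eq_conj_diagonal_of_exp_eq {v : n → ℝ} (hU : IsUnit U)
    (hv : Function.Injective v) {Q : Matrix n n ℝ} (hQ : exp Q = U * diagonal v * U⁻¹) :
    ∃ w : n → ℝ, Q = U * diagonal w * U⁻¹ ∧ Real.exp ∘ w = v := by
  have hdet := (isUnit_iff_isUnit_det U).mp hU
  have hconj (A : Matrix n n ℝ) : U⁻¹ * (U * A * U⁻¹) * U = A := by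
    simp only [mul_assoc, nonsing_inv_mul _ hdet, mul_one,
      nonsing_inv_mul_cancel_left (h := hdet)]
  set D := U⁻¹ * Q * U
  have hQD : Q = U * D * U⁻¹ := by
    simp only [D, mul_assoc, mul_nonsing_inv _ hdet, mul_one,
      mul_nonsing_inv_cancel_left (h := hdet)]
  have hcomm : Commute D (diagonal v) := by
    have hQE : Q * (exp Q * U) = exp Q * (Q * U) := by
      rw [← mul_assoc, ((Commute.refl Q).exp_right).eq, mul_assoc]
    rw [← hconj (diagonal v), ← hQ]
    simp only [Commute, SemiconjBy, D, mul_assoc, mul_nonsing_inv_cancel_left (h := hdet), hQE]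
  have hQw : Q = U * diagonal D.diag * U⁻¹ := by
    rwa [← eq_diagonal_diag_of_commute_diagonal hv hcomm]
  refine ⟨D.diag, hQw, diagonal_injective ?_⟩
  rw [← hconj (diagonal v), ← hQ, hQw, exp_conj_diagonal hU, hconj]

end Conj

def hadamard4 : Matrix (Fin 4) (Fin 4) ℝ :=
  !![1, 1, 1, 1; 1, 1, -1, -1; 1, -1, 1, -1; 1, -1, -1, 1]

theorem hadamard4_mul_self : hadamard4 * hadamard4 = (4 : ℝ) • 1 := by
  ext i j
  fin_cases i <;> fin_cases j <;>
    simp [hadamard4, mul_apply, Fin.sum_univ_four, one_apply] <;> norm_num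

theorem hadamard4_mul_smul_hadamard4 : hadamard4 * ((4 : ℝ)⁻¹ • hadamard4) = 1 := by
  rw [Matrix.mul_smul, hadamard4_mul_self, smul_smul]; norm_num

theorem inv_hadamard4 : hadamard4⁻¹ = (4 : ℝ)⁻¹ • hadamard4 :=
  inv_eq_right_inv hadamard4_mul_smul_hadamard4

theorem isUnit_hadamard4 : IsUnit hadamard4 :=
  (isUnit_iff_isUnit_det _).2 (isUnit_det_of_right_inverse hadamard4_mul_smul_hadamard4)

theorem hadamard4_conj_diagonal (s p q r : ℝ) :
    hadamard4 * diagonal ![s, p, q, r] * hadamard4⁻¹ =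
      K ((s + p + q + r) / 4) ((s + p - q - r) / 4) ((s - p + q - r) / 4)
        ((s - p - q + r) / 4) := by
  rw [inv_hadamard4]
  ext i j
  fin_cases i <;> fin_cases j <;>
    simp [hadamard4, K, mul_apply, vecMul_diagonal, Fin.sum_univ_four] <;> ring

theorem isRate_K_iff {α β γ δ : ℝ} :
    IsRate (K α β γ δ) ↔ 0 ≤ β ∧ 0 ≤ γ ∧ 0 ≤ δ ∧ α + β + γ + δ = 0 := by
  constructor
  · rintro ⟨hoff, hrow⟩
    refine ⟨hoff 0 1 (by decide), hoff 0 2 (by decide), hoff 0 3 (by decide), ?_⟩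
    simpa [K, Fin.sum_univ_four] using hrow 0
  · rintro ⟨hβ, hγ, hδ, hsum⟩
    refine ⟨fun i j hij => ?_, fun i => ?_⟩
    · fin_cases i <;> fin_cases j <;> simp_all [K]
    · fin_cases i <;> simp [K, Fin.sum_univ_four] <;> linarith

theorem isRate_hadamard4_conj_diagonal_iff {s p q r : ℝ} :
    IsRate (hadamard4 * diagonal ![s, p, q, r] * hadamard4⁻¹) ↔
      s = 0 ∧ q + r ≤ p ∧ p + r ≤ q ∧ p + q ≤ r := by
  rw [hadamard4_conj_diagonal, isRate_K_iff]
  constructor <;> rintro ⟨h₀, h₁, h₂, h₃⟩ <;> refine ⟨?_, ?_, ?_, ?_⟩ <;> linarith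

theorem add_le_iff_mul_le_of_exp_eq {p q r x y z : ℝ}
    (hp : Real.exp p = x) (hq : Real.exp q = y) (hr : Real.exp r = z) :
    (q + r ≤ p ∧ p + r ≤ q ∧ p + q ≤ r) ↔
      (0 < x ∧ 0 < y ∧ 0 < z ∧ y * z ≤ x ∧ x * z ≤ y ∧ x * y ≤ z) := by
  subst hp hq hr
  simp only [Real.exp_pos, true_and, ← Real.exp_add, Real.exp_le_exp]

section K3Embedding

variable {x y z : ℝ}

theorem exists_eq_K_and_ineqs_of_isRate_of_exp_eq (hv : Function.Injective ![1, x, y, z])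
    {Q : Matrix (Fin 4) (Fin 4) ℝ} (hQ : IsRate Q)
    (hexp : exp Q = hadamard4 * diagonal ![1, x, y, z] * hadamard4⁻¹) :
    (∃ α β γ δ : ℝ, Q = K α β γ δ) ∧
      (0 < x ∧ 0 < y ∧ 0 < z ∧ y * z ≤ x ∧ x * z ≤ y ∧ x * y ≤ z) := by
  obtain ⟨w, rfl, hw⟩ := exists_eq_conj_diagonal_of_exp_eq isUnit_hadamard4 hv hexp
  have hw_vec : w = ![w 0, w 1, w 2, w 3] := by ext i; fin_cases i <;> rfl
  rw [hw_vec] at hQ ⊢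
  refine ⟨⟨_, _, _, _, hadamard4_conj_diagonal _ _ _ _⟩, ?_⟩
  exact (add_le_iff_mul_le_of_exp_eq (congr_fun hw 1) (congr_fun hw 2) (congr_fun hw 3)).1
    (isRate_hadamard4_conj_diagonal_iff.1 hQ).2

theorem exists_isRate_eq_K_exp_eq_of_ineqs
    (h : 0 < x ∧ 0 < y ∧ 0 < z ∧ y * z ≤ x ∧ x * z ≤ y ∧ x * y ≤ z) :
    ∃ Q : Matrix (Fin 4) (Fin 4) ℝ, IsRate Q ∧ (∃ α β γ δ : ℝ, Q = K α β γ δ) ∧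
      exp Q = hadamard4 * diagonal ![1, x, y, z] * hadamard4⁻¹ := by
  have hlog := add_le_iff_mul_le_of_exp_eq (Real.exp_log h.1) (Real.exp_log h.2.1)
    (Real.exp_log h.2.2.1)
  refine ⟨hadamard4 * diagonal ![0, Real.log x, Real.log y, Real.log z] * hadamard4⁻¹,
    isRate_hadamard4_conj_diagonal_iff.2 ⟨rfl, hlog.2 h⟩,
    ⟨_, _, _, _, hadamard4_conj_diagonal _ _ _ _⟩, ?_⟩
  have hexp : Real.exp ∘ ![0, Real.log x, Real.log y, Real.log z] = ![1, x, y, z] := by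
    ext i
    fin_cases i <;> simp [Real.exp_log, h.1, h.2.1, h.2.2.1]
  rw [exp_conj_diagonal isUnit_hadamard4, hexp]

end K3Embedding

theorem stmt_9 (a b c d x y z : ℝ)
    (hx : x = a + b - c - d) (hy : y = a - b + c - d) (hz : z = a - b - c + d)
    (hM : IsMarkov (K a b c d))
    (h1x : (1 : ℝ) ≠ x) (h1y : (1 : ℝ) ≠ y) (h1z : (1 : ℝ) ≠ z)
    (hxy : x ≠ y) (hxz : x ≠ z) (hyz : y ≠ z) :
    ((∃ Q : Matrix (Fin 4) (Fin 4) ℝ, IsRate Q ∧ NormedSpace.exp Q = K a b c d) ↔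
      (∃ Q : Matrix (Fin 4) (Fin 4) ℝ, IsRate Q ∧ (∃ α β γ δ : ℝ, Q = K α β γ δ) ∧
        NormedSpace.exp Q = K a b c d)) ∧
    ((∃ Q : Matrix (Fin 4) (Fin 4) ℝ, IsRate Q ∧ NormedSpace.exp Q = K a b c d) ↔
      (0 < x ∧ 0 < y ∧ 0 < z ∧ y * z ≤ x ∧ x * z ≤ y ∧ x * y ≤ z)) := by
  have hsum : a + b + c + d = 1 := by simpa [K, Fin.sum_univ_four] using hM.2 0
  have hK : K a b c d = hadamard4 * diagonal ![1, x, y, z] * hadamard4⁻¹ := by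
    rw [hadamard4_conj_diagonal]
    congr <;> linarith
  have hv : Function.Injective ![1, x, y, z] := by
    simp [Function.Injective, Fin.forall_fin_succ, h1x, h1y, h1z, hxy, hxz, hyz, h1x.symm,
      h1y.symm, h1z.symm, hxy.symm, hxz.symm, hyz.symm]
  rw [hK]
  constructor
  · exact ⟨fun ⟨Q, hQ, hexp⟩ =>
        ⟨Q, hQ, (exists_eq_K_and_ineqs_of_isRate_of_exp_eq hv hQ hexp).1, hexp⟩,
      fun ⟨Q, hQ, _, hexp⟩ => ⟨Q, hQ, hexp⟩⟩
  · refine ⟨fun ⟨Q, hQ, hexp⟩ => (exists_eq_K_and_ineqs_of_isRate_of_exp_eq hv hQ hexp).2,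
      fun h => ?_⟩
    obtain ⟨Q, hQ, -, hexp⟩ := exists_isRate_eq_K_exp_eq_of_ineqs h
    exact ⟨Q, hQ, hexp⟩
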